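/- arXiv:2603.16153 — 2 statements merged into one kernel-verified Lean document; each statement's English description precedes it below -/
import Mathlib

section
/- Let T_s > 0 and T_b ≥ 0 be real numbers (the number of true positive tuples in the sampling regime and in the blocking regime, respectively), let 0 ≤ γ ≤ 1 be the overall recall target, and let U ≥ T_s be an upper bound on T_s. Suppose a retrieved result contains all T_b positives of the blocking regime and at least R_s positives of the sampling regime, where R_s ≥ (γ − (1 − γ)·T_b/U) · T_s. Then the overall recall satisfies (R_s + T_b)/(T_s + T_b) ≥ γ. -/
/-- Deterministic core of Lemma 1 for selection join queries: translating the
sampling-regime recall target into the overall recall target. -/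
theorem stmt_12 (Ts Tb γ U Rs : ℝ)
    (hTs : 0 < Ts) (hTb : 0 ≤ Tb) (hγ0 : 0 ≤ γ) (hγ1 : γ ≤ 1)
    (hU : Ts ≤ U)
    (hRs : (γ - (1 - γ) * Tb / U) * Ts ≤ Rs) :
    γ ≤ (Rs + Tb) / (Ts + Tb) := by
  have hU0 : 0 < U := lt_of_lt_of_le hTs hU
  have key : (1 - γ) * Tb / U * Ts ≤ (1 - γ) * Tb := by
    rw [div_mul_eq_mul_div, div_le_iff₀ hU0]
    nlinarith [mul_nonneg (sub_nonneg.2 hγ1) hTb]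
  rw [le_div_iff₀ (by linarith)]
  nlinarith
end

section
/- Let D̃ be a finite nonempty set and D̃_s ⊆ D̃ a nonempty subset (the matching tuples of the full space and of the sampling regime, respectively). Let f : D̃ → ℝ, let W : D̃ → ℝ and W_s : D̃_s → ℝ satisfy W(s) > 0 and W_s(s) > 0, and let b > 0 and b_s > 0 be real budgets. Define S = Σ_{s∈D̃} f(s), S_s = Σ_{s∈D̃_s} f(s), B = Σ_{s∈D̃} f(s)²/W(s), B_s = Σ_{s∈D̃_s} f(s)²/W_s(s), MSE_full = (B − S²)/b, and MSE_bas = (B_s − S_s²)/b_s. Assume S ≠ 0, S_s ≠ 0, B > S², and the two conditions (i) B_s/S_s² ≤ B/S² and (ii) S_s²/b_s ≤ S²/b. Then MSE_bas ≤ C · MSE_full, where C = ((S_s²/b_s)/(S²/b)) · ((B_s/S_s²)/(B/S²)) ≤ 1; in particular MSE_bas ≤ MSE_full. -/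
/-- Deterministic finite-sample core of Theorem 2: under the two conditions
(i) and (ii), Blocking-augmented Sampling outperforms plain importance
sampling (Weighted Wander Join) with the explicit factor `C ≤ 1`. -/
theorem stmt_15 {D : Type*} [Fintype D] [Nonempty D]
    (Ds : Finset D) (hDs : Ds.Nonempty)
    (f W Ws : D → ℝ)
    (hW : ∀ s, 0 < W s) (hWs : ∀ s ∈ Ds, 0 < Ws s)
    (b bs : ℝ) (hb : 0 < b) (hbs : 0 < bs)
    (S Ss B Bs MSEfull MSEbas C : ℝ)
    (hS : S = ∑ s, f s) (hSs : Ss = ∑ s ∈ Ds, f s)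
    (hB : B = ∑ s, f s ^ 2 / W s) (hBs : Bs = ∑ s ∈ Ds, f s ^ 2 / Ws s)
    (hMf : MSEfull = (B - S ^ 2) / b) (hMb : MSEbas = (Bs - Ss ^ 2) / bs)
    (hSne : S ≠ 0) (hSsne : Ss ≠ 0) (hBS : S ^ 2 < B)
    (hcond1 : Bs / Ss ^ 2 ≤ B / S ^ 2)
    (hcond2 : Ss ^ 2 / bs ≤ S ^ 2 / b)
    (hC : C = ((Ss ^ 2 / bs) / (S ^ 2 / b)) * ((Bs / Ss ^ 2) / (B / S ^ 2))) :
    MSEbas ≤ C * MSEfull ∧ C ≤ 1 ∧ MSEbas ≤ MSEfull := by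
  have hS2 : (0:ℝ) < S ^ 2 := by positivity
  have hSs2 : (0:ℝ) < Ss ^ 2 := by positivity
  have hBpos : (0:ℝ) < B := lt_trans hS2 hBS
  have hBsnn : (0:ℝ) ≤ Bs := by
    rw [hBs]
    exact Finset.sum_nonneg fun s hs => div_nonneg (by positivity) (hWs s hs).le
  -- cond1 cleared: Bs * S^2 ≤ B * Ss^2
  have hc1 : Bs * S ^ 2 ≤ B * Ss ^ 2 := by
    have := (div_le_div_iff₀ hSs2 hS2).mp hcond1
    linarith
  have hc2 : Ss ^ 2 * b ≤ S ^ 2 * bs := by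
    have := (div_le_div_iff₀ hbs hb).mp hcond2
    linarith
  have h1 : MSEbas ≤ C * MSEfull := by
    rw [hMb, hMf, hC]
    have hCval : Ss ^ 2 / bs / (S ^ 2 / b) * (Bs / Ss ^ 2 / (B / S ^ 2)) * ((B - S ^ 2) / b)
        = Bs * (B - S ^ 2) / (bs * B) := by
      field_simp
    rw [hCval, div_le_div_iff₀ hbs (by positivity)]
    nlinarith [mul_le_mul_of_nonneg_left hc1 hbs.le]
  have hC1 : C ≤ 1 := by
    rw [hC]
    have hf1 : Ss ^ 2 / bs / (S ^ 2 / b) ≤ 1 :=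
      (div_le_one (by positivity)).mpr hcond2
    have hf2 : Bs / Ss ^ 2 / (B / S ^ 2) ≤ 1 :=
      (div_le_one (by positivity)).mpr hcond1
    have hf2n : (0:ℝ) ≤ Bs / Ss ^ 2 / (B / S ^ 2) := by positivity
    have hf1n : (0:ℝ) ≤ Ss ^ 2 / bs / (S ^ 2 / b) := by positivity
    calc Ss ^ 2 / bs / (S ^ 2 / b) * (Bs / Ss ^ 2 / (B / S ^ 2))
        ≤ 1 * 1 := mul_le_mul hf1 hf2 hf2n zero_le_one
      _ = 1 := by ring
  have hCnn : 0 ≤ C := by rw [hC]; positivity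
  have hMfnn : 0 ≤ MSEfull := by rw [hMf]; exact div_nonneg (by linarith) hb.le
  have h2 : MSEbas ≤ MSEfull := le_trans h1 (by nlinarith)
  exact ⟨h1, hC1, h2⟩
end
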